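/- arXiv:2509.06287 — 2 statements merged into one kernel-verified Lean document; each statement's English description precedes it below -/
import Mathlib

section
/- For π ∈ [0,1]^K, define Clip(π) = max{π − ν*(π), π_min} coordinatewise, where ν*(π) is the unique value ν such that Σ_{a=1}^K max{π_a − ν, π_min} = 1. Then Clip(π) equals the L2 (Euclidean) projection of π onto the constrained simplex {p ∈ [0,1]^K : Σ_{a=1}^K p_a = 1, p_a ≥ π_min for all a}. -/
/-!
Clip(π) satisfies the variational inequality characterizing the Euclidean projection onto a
convex set: `∑ₐ (πₐ - cₐ)(cₐ - qₐ) ≥ 0` for every feasible `q`. Since `c` and `q` both sum to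
one, `π - c` may be replaced by `π - ν - c`, and each term `(πₐ - ν - cₐ)(cₐ - qₐ)` is
nonnegative: it vanishes where `cₐ = πₐ - ν`, and otherwise `cₐ = π_min ≤ qₐ` while
`πₐ - ν < π_min`, so both factors are nonpositive.
-/

open Finset

section

variable {ι : Type*} [Fintype ι]

theorem sum_sq_sub_le_sum_sq_sub_of_sum_mul_nonneg {p c q : ι → ℝ}
    (h : 0 ≤ ∑ a, (p a - c a) * (c a - q a)) :
    ∑ a, (p a - c a) ^ 2 ≤ ∑ a, (p a - q a) ^ 2 := by
  have expand : ∑ a, (p a - q a) ^ 2 = ∑ a, (p a - c a) ^ 2 + ∑ a, (c a - q a) ^ 2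
      + 2 * ∑ a, (p a - c a) * (c a - q a) := by
    rw [mul_sum, ← sum_add_distrib, ← sum_add_distrib]
    exact sum_congr rfl fun a _ => by ring
  have hsq : 0 ≤ ∑ a, (c a - q a) ^ 2 := sum_nonneg fun a _ => sq_nonneg _
  linarith

theorem sum_sub_mul_sub_eq_sum_sub_sub_mul_sub {p c q : ι → ℝ} (ν : ℝ)
    (h : ∑ a, c a = ∑ a, q a) :
    ∑ a, (p a - c a) * (c a - q a) = ∑ a, (p a - ν - c a) * (c a - q a) :=
  calc ∑ a, (p a - c a) * (c a - q a)
      = ∑ a, ((p a - ν - c a) * (c a - q a) + ν * (c a - q a)) :=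
        sum_congr rfl fun a _ => by ring
    _ = ∑ a, (p a - ν - c a) * (c a - q a) + ν * (∑ a, c a - ∑ a, q a) := by
        rw [sum_add_distrib, ← mul_sum, sum_sub_distrib]
    _ = ∑ a, (p a - ν - c a) * (c a - q a) := by rw [h, sub_self, mul_zero, add_zero]

theorem mem_Icc_of_nonneg_of_sum_eq_one {c : ι → ℝ} (h0 : ∀ a, 0 ≤ c a)
    (h1 : ∑ a, c a = 1) (a : ι) : c a ∈ Set.Icc (0 : ℝ) 1 :=
  ⟨h0 a, h1 ▸ single_le_sum (fun b _ => h0 b) (mem_univ a)⟩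

end

theorem sub_max_mul_max_sub_nonneg {t m y : ℝ} (hy : m ≤ y) :
    0 ≤ (t - max t m) * (max t m - y) := by
  rcases le_total m t with h | h
  · simp [max_eq_left h]
  · rw [max_eq_right h]
    exact mul_nonneg_of_nonpos_of_nonpos (by linarith) (by linarith)

theorem sum_sq_sub_max_le {ι : Type*} [Fintype ι] {p q : ι → ℝ} {ν m : ℝ}
    (hsum : ∑ a, max (p a - ν) m = ∑ a, q a) (hq : ∀ a, m ≤ q a) :
    ∑ a, (p a - max (p a - ν) m) ^ 2 ≤ ∑ a, (p a - q a) ^ 2 := by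
  apply sum_sq_sub_le_sum_sq_sub_of_sum_mul_nonneg
  rw [sum_sub_mul_sub_eq_sum_sub_sub_mul_sub ν hsum]
  exact sum_nonneg fun a _ => sub_max_mul_max_sub_nonneg (hq a)

theorem clip_eq_L2_projection_general
    {K : ℕ} (πmin : ℝ) (hπmin_pos : 0 < πmin)
    (p : Fin K → ℝ)
    (ν : ℝ) (hν : ∑ a, max (p a - ν) πmin = 1) :
    -- Clip(p) lies in the constrained simplex ...
    ((∀ a, max (p a - ν) πmin ∈ Set.Icc (0 : ℝ) 1) ∧
      (∑ a, max (p a - ν) πmin = 1) ∧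
      (∀ a, πmin ≤ max (p a - ν) πmin)) ∧
    -- ... and minimizes the Euclidean distance to p over that set
    (∀ q : Fin K → ℝ,
      (∀ a, q a ∈ Set.Icc (0 : ℝ) 1) → (∑ a, q a = 1) → (∀ a, πmin ≤ q a) →
      ∑ a, (p a - max (p a - ν) πmin) ^ 2 ≤ ∑ a, (p a - q a) ^ 2) := by
  have hmin : ∀ a, πmin ≤ max (p a - ν) πmin := fun a => le_max_right _ _
  have hnonneg : ∀ a, 0 ≤ max (p a - ν) πmin := fun a => hπmin_pos.le.trans (hmin a)
  refine ⟨⟨mem_Icc_of_nonneg_of_sum_eq_one hnonneg hν, hν, hmin⟩, ?_⟩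
  intro q _ hq hqmin
  exact sum_sq_sub_max_le (hν.trans hq.symm) hqmin

/-- **Lemma 1 (the clipping operator is the L2 projection onto the constrained simplex).**
For `π ∈ [0,1]^K` and `ν*(π)` the (unique) value `ν` with `∑ₐ max(πₐ − ν, π_min) = 1`, the
vector `Clip(π) = (max(πₐ − ν*(π), π_min))ₐ` is the Euclidean (L2) projection of `π` onto
`{p ∈ [0,1]^K : ∑ₐ pₐ = 1, pₐ ≥ π_min}`: it belongs to this set and minimizes the squared
Euclidean distance to `π` over it. -/
theorem clip_eq_L2_projection
    {K : ℕ} (πmin : ℝ) (hπmin_pos : 0 < πmin) (hπmin_le : πmin ≤ 1 / K)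
    (p : Fin K → ℝ) (hp : ∀ a, p a ∈ Set.Icc (0 : ℝ) 1)
    (ν : ℝ) (hν : ∑ a, max (p a - ν) πmin = 1)
    (hν_unique : ∀ ν' : ℝ, (∑ a, max (p a - ν') πmin = 1) → ν' = ν) :
    -- Clip(p) lies in the constrained simplex ...
    ((∀ a, max (p a - ν) πmin ∈ Set.Icc (0 : ℝ) 1) ∧
      (∑ a, max (p a - ν) πmin = 1) ∧
      (∀ a, πmin ≤ max (p a - ν) πmin)) ∧
    -- ... and minimizes the Euclidean distance to p over that set
    (∀ q : Fin K → ℝ,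
      (∀ a, q a ∈ Set.Icc (0 : ℝ) 1) → (∑ a, q a = 1) → (∀ a, πmin ≤ q a) →
      ∑ a, (p a - max (p a - ν) πmin) ^ 2 ≤ ∑ a, (p a - q a) ^ 2) :=
  clip_eq_L2_projection_general πmin hπmin_pos p ν hν
end

section
/- The clipping map Clip: [0,1]^K → R^K defined by Clip(π) = max{π − ν*(π), π_min} coordinatewise, where ν*(π) is the unique ν with Σ_{a=1}^K max{π_a − ν, π_min} = 1, is Lipschitz continuous with Lipschitz constant K + 1 with respect to the Euclidean norm: ‖Clip(π) − Clip(π')‖₂ ≤ (K+1)‖π − π'‖₂ for all π, π' ∈ [0,1]^K. -/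
/-!
Moving every coordinate of `π` by at most `c` moves the threshold `ν*(π)` by at most `c`: the
function `t ↦ ∑ₐ max(π'ₐ − t, π_min)` is continuous and antitone, and it lies on either side of `1`
at `ν*(π) ± c`, so by the intermediate value theorem its unique root `ν*(π')` lies in between.
With `c = ‖π − π'‖₁` each clipped coordinate then moves by at most `|πₐ − π'ₐ| + ‖π − π'‖₁`, and
`‖π − π'‖₁ ≤ √K ‖π − π'‖₂` turns this into the bound `(K + 1) ‖π − π'‖₂`.
-/

open Finset

section Clip

variable {ι : Type*} [Fintype ι]

theorem abs_sub_le_of_sum_max_sub_eq {p q : ι → ℝ} {m s c ν ν' : ℝ}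
    (hpq : ∀ a, |p a - q a| ≤ c) (hc : 0 ≤ c)
    (hν : ∑ a, max (p a - ν) m = s) (hν' : ∀ t, ∑ a, max (q a - t) m = s → t = ν') :
    |ν - ν'| ≤ c := by
  set g : ℝ → ℝ := fun t => ∑ a, max (q a - t) m
  have hg : Continuous g :=
    continuous_finsetSum _ fun a _ => (continuous_const.sub continuous_id).max continuous_const
  have hg_right : g (ν + c) ≤ s := hν ▸ sum_le_sum fun a _ =>
    max_le_max (by linarith [(abs_sub_le_iff.mp (hpq a)).2]) le_rfl
  have hg_left : s ≤ g (ν - c) := hν ▸ sum_le_sum fun a _ =>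
    max_le_max (by linarith [(abs_sub_le_iff.mp (hpq a)).1]) le_rfl
  obtain ⟨t, ⟨ht_left, ht_right⟩, hgt⟩ :=
    intermediate_value_Icc' (by linarith) hg.continuousOn ⟨hg_right, hg_left⟩
  obtain rfl := hν' t hgt
  exact abs_sub_le_iff.mpr ⟨by linarith, by linarith⟩

theorem abs_max_sub_sub_max_sub_le (x y ν ν' m : ℝ) :
    |max (x - ν) m - max (y - ν') m| ≤ |x - y| + |ν - ν'| :=
  (abs_max_sub_max_le_abs _ _ m).trans (by rw [sub_sub_sub_comm]; exact abs_sub _ _)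

theorem sum_sq_abs_add_sum_abs_le (v : ι → ℝ) :
    ∑ a, (|v a| + ∑ b, |v b|) ^ 2 ≤ (Fintype.card ι + 1) ^ 2 * ∑ a, v a ^ 2 := by
  set δ := ∑ b, |v b|
  set T := ∑ a, v a ^ 2
  have hT : 0 ≤ T := sum_nonneg fun a _ => sq_nonneg _
  have hδ : δ ^ 2 ≤ Fintype.card ι * T := by
    simpa only [sq_abs, card_univ] using sq_sum_le_card_mul_sum_sq (s := univ) (f := fun b => |v b|)
  calc ∑ a, (|v a| + δ) ^ 2 = T + (2 + Fintype.card ι) * δ ^ 2 := by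
        simp only [add_sq, sq_abs, sum_add_distrib, ← sum_mul, ← mul_sum, sum_const, card_univ,
          nsmul_eq_mul]
        ring
    _ ≤ T + (2 + Fintype.card ι) * (Fintype.card ι * T) := by gcongr
    _ = (Fintype.card ι + 1) ^ 2 * T := by ring

end Clip

theorem clip_lipschitz_general
    {K : ℕ} (πmin : ℝ)
    (p q : Fin K → ℝ)
    (ν ν' : ℝ)
    (hν : ∑ a, max (p a - ν) πmin = 1)
    (hν'_unique : ∀ t : ℝ, (∑ a, max (q a - t) πmin = 1) → t = ν') :
    Real.sqrt (∑ a, (max (p a - ν) πmin - max (q a - ν') πmin) ^ 2) ≤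
      (K + 1) * Real.sqrt (∑ a, (p a - q a) ^ 2) := by
  set δ := ∑ a, |p a - q a|
  have hshift : |ν - ν'| ≤ δ :=
    abs_sub_le_of_sum_max_sub_eq
      (fun a => single_le_sum (fun b _ => abs_nonneg (p b - q b)) (mem_univ a))
      (sum_nonneg fun a _ => abs_nonneg _) hν hν'_unique
  have hcoord : ∀ a, (max (p a - ν) πmin - max (q a - ν') πmin) ^ 2 ≤ (|p a - q a| + δ) ^ 2 :=
    fun a =>
      have h := (abs_max_sub_sub_max_sub_le (p a) (q a) ν ν' πmin).trans (by linarith)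
      sq_le_sq' (abs_le.mp h).1 (abs_le.mp h).2
  calc Real.sqrt (∑ a, (max (p a - ν) πmin - max (q a - ν') πmin) ^ 2)
      ≤ Real.sqrt (∑ a, (|p a - q a| + δ) ^ 2) := Real.sqrt_le_sqrt (sum_le_sum fun a _ => hcoord a)
    _ ≤ Real.sqrt ((K + 1) ^ 2 * ∑ a, (p a - q a) ^ 2) := by
        simpa using Real.sqrt_le_sqrt (sum_sq_abs_add_sum_abs_le (p - q))
    _ = (K + 1) * Real.sqrt (∑ a, (p a - q a) ^ 2) := by
        rw [Real.sqrt_mul (by positivity), Real.sqrt_sq (by positivity)]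

/-- **The clipping map is `(K+1)`-Lipschitz in the Euclidean norm.**
For `π, π' ∈ [0,1]^K`, letting `ν, ν'` be the (unique) constants with
`∑ₐ max(πₐ − ν, π_min) = 1` and `∑ₐ max(π'ₐ − ν', π_min) = 1`, the clipped vectors satisfy
`‖Clip(π) − Clip(π')‖₂ ≤ (K+1) ‖π − π'‖₂`. -/
theorem clip_lipschitz
    {K : ℕ} (πmin : ℝ) (hπmin_pos : 0 < πmin) (hπmin_le : πmin ≤ 1 / K)
    (p q : Fin K → ℝ)
    (hp : ∀ a, p a ∈ Set.Icc (0 : ℝ) 1) (hq : ∀ a, q a ∈ Set.Icc (0 : ℝ) 1)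
    (ν ν' : ℝ)
    (hν : ∑ a, max (p a - ν) πmin = 1)
    (hν' : ∑ a, max (q a - ν') πmin = 1)
    (hν_unique : ∀ t : ℝ, (∑ a, max (p a - t) πmin = 1) → t = ν)
    (hν'_unique : ∀ t : ℝ, (∑ a, max (q a - t) πmin = 1) → t = ν') :
    Real.sqrt (∑ a, (max (p a - ν) πmin - max (q a - ν') πmin) ^ 2) ≤
      (K + 1) * Real.sqrt (∑ a, (p a - q a) ^ 2) :=
  clip_lipschitz_general πmin p q ν ν' hν hν'_unique
end
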